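/- arXiv:2503.12431 — 4 statements merged into one kernel-verified Lean document; each statement's English description precedes it below -/
import Mathlib

section
/- Let n ≥ 1 and for each i = 1,…,n let α_i ≥ 1, γ_i ≥ 1, β_i > 0, and suppose α_j + β_j ≥ 2 for some index j. Then the sequence x_k = Γ(k+1) / ∏_{i=1}^n [Γ(α_i k + β_i)]^{γ_i} is monotonically decreasing for k ≥ 1. -/
open Finset

lemma gamma_step {x a : ℝ} (hx : 1 ≤ x) (ha : 1 ≤ a) :
    x * Real.Gamma x ≤ Real.Gamma (x + a) := by
  have h1 : Real.Gamma (x + 1) = x * Real.Gamma x := Real.Gamma_add_one (by linarith)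
  have h2 : Real.Gamma (x + 1) ≤ Real.Gamma (x + a) :=
    Real.Gamma_strictMonoOn_Ici.monotoneOn (by simp [Set.mem_Ici]; linarith)
      (by simp [Set.mem_Ici]; linarith) (by linarith)
  linarith

theorem multi_leroy_coeff_antitone (n : ℕ) (hn : 1 ≤ n)
    (α β γ : Fin n → ℝ)
    (hα : ∀ i, 1 ≤ α i) (hγ : ∀ i, 1 ≤ γ i) (hβ : ∀ i, 0 < β i)
    (hj : ∃ j, 2 ≤ α j + β j) :
    ∀ k : ℕ, 1 ≤ k →
      Real.Gamma ((k + 1 : ℕ) + 1) / ∏ i, (Real.Gamma (α i * (k + 1 : ℕ) + β i)) ^ γ i ≤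
        Real.Gamma ((k : ℕ) + 1) / ∏ i, (Real.Gamma (α i * (k : ℕ) + β i)) ^ γ i := by
  intro k hk
  obtain ⟨j, hj⟩ := hj
  set K : ℝ := (k : ℝ) with hK
  have hK1 : (1 : ℝ) ≤ K := Nat.one_le_cast.mpr hk
  -- basics
  have hx : ∀ i, 1 ≤ α i * K + β i := fun i => by
    nlinarith [hα i, hβ i, hβ i]
  have hGpos : ∀ i, 0 < Real.Gamma (α i * K + β i) := fun i =>
    Real.Gamma_pos_of_pos (by linarith [hx i])
  have hG'pos : ∀ i, 0 < Real.Gamma (α i * (K + 1) + β i) := fun i =>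
    Real.Gamma_pos_of_pos (by nlinarith [hα i, hβ i])
  -- per-factor bounds
  have hstep : ∀ i, (α i * K + β i) * Real.Gamma (α i * K + β i) ≤
      Real.Gamma (α i * (K + 1) + β i) := fun i => by
    have := gamma_step (hx i) (hα i)
    have e : α i * K + β i + α i = α i * (K + 1) + β i := by ring
    rwa [e] at this
  have hfac : ∀ i, Real.Gamma (α i * K + β i) ^ γ i ≤
      Real.Gamma (α i * (K + 1) + β i) ^ γ i := fun i => by
    have h1 : Real.Gamma (α i * K + β i) ≤ Real.Gamma (α i * (K + 1) + β i) := by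
      nlinarith [hstep i, hGpos i, hx i]
    exact Real.rpow_le_rpow (hGpos i).le h1 (by linarith [hγ i])
  -- the special factor
  have hxj : K + 1 ≤ α j * K + β j := by nlinarith [hα j]
  have hfj : (K + 1) * Real.Gamma (α j * K + β j) ^ γ j ≤
      Real.Gamma (α j * (K + 1) + β j) ^ γ j := by
    have h1 : (K + 1) * Real.Gamma (α j * K + β j) ≤
        Real.Gamma (α j * (K + 1) + β j) := by
      nlinarith [hstep j, hGpos j]
    have h2 : ((K + 1) * Real.Gamma (α j * K + β j)) ^ γ j ≤
        Real.Gamma (α j * (K + 1) + β j) ^ γ j :=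
      Real.rpow_le_rpow (mul_nonneg (by linarith) (hGpos j).le) h1 (by linarith [hγ j])
    have h3 : ((K + 1) * Real.Gamma (α j * K + β j)) ^ γ j =
        (K + 1) ^ γ j * Real.Gamma (α j * K + β j) ^ γ j :=
      Real.mul_rpow (by linarith) (hGpos j).le
    have h4 : (K + 1) ≤ (K + 1) ^ γ j := by
      calc (K + 1) = (K + 1) ^ (1 : ℝ) := (Real.rpow_one _).symm
        _ ≤ (K + 1) ^ γ j :=
          Real.rpow_le_rpow_of_exponent_le (by linarith) (hγ j)
    nlinarith [Real.rpow_pos_of_pos (hGpos j) (γ j), h2, h3]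
  -- product bound
  have hBpos : 0 < ∏ i, Real.Gamma (α i * K + β i) ^ γ i :=
    Finset.prod_pos fun i _ => Real.rpow_pos_of_pos (hGpos i) _
  have hB'pos : 0 < ∏ i, Real.Gamma (α i * (K + 1) + β i) ^ γ i :=
    Finset.prod_pos fun i _ => Real.rpow_pos_of_pos (hG'pos i) _
  have hprod : (K + 1) * ∏ i, Real.Gamma (α i * K + β i) ^ γ i ≤
      ∏ i, Real.Gamma (α i * (K + 1) + β i) ^ γ i := by
    rw [← Finset.mul_prod_erase univ (fun i => Real.Gamma (α i * (K + 1) + β i) ^ γ i) (mem_univ j),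
        ← Finset.mul_prod_erase univ (fun i => Real.Gamma (α i * K + β i) ^ γ i) (mem_univ j),
        ← mul_assoc]
    have hrest : ∏ i ∈ univ.erase j, Real.Gamma (α i * K + β i) ^ γ i ≤
        ∏ i ∈ univ.erase j, Real.Gamma (α i * (K + 1) + β i) ^ γ i :=
      Finset.prod_le_prod (fun i _ => (Real.rpow_pos_of_pos (hGpos i) _).le)
        (fun i _ => hfac i)
    have hrestpos : 0 < ∏ i ∈ univ.erase j, Real.Gamma (α i * K + β i) ^ γ i :=
      Finset.prod_pos fun i _ => Real.rpow_pos_of_pos (hGpos i) _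
    exact mul_le_mul hfj hrest hrestpos.le (Real.rpow_pos_of_pos (hG'pos j) _).le
  -- finish
  have hcast : ((k + 1 : ℕ) : ℝ) = K + 1 := by push_cast [hK]; ring
  rw [hcast]
  have hGam : Real.Gamma (K + 1 + 1) = (K + 1) * Real.Gamma (K + 1) :=
    Real.Gamma_add_one (by linarith)
  have hGKpos : 0 < Real.Gamma (K + 1) := Real.Gamma_pos_of_pos (by linarith)
  rw [div_le_div_iff₀ hB'pos hBpos, hGam]
  calc (K + 1) * Real.Gamma (K + 1) * ∏ i, Real.Gamma (α i * K + β i) ^ γ i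
      = Real.Gamma (K + 1) * ((K + 1) * ∏ i, Real.Gamma (α i * K + β i) ^ γ i) := by ring
    _ ≤ Real.Gamma (K + 1) * ∏ i, Real.Gamma (α i * (K + 1) + β i) ^ γ i :=
        mul_le_mul_of_nonneg_left hprod hGKpos.le
end

section
/- Let n ≥ 1 and for each i let α_i ≥ 1, γ_i ≥ 1, β_i > 0 with α_j + β_j ≥ 2 for some j. Define θ = ∏_{i=1}^n [Γ(β_i)/Γ(α_i + β_i)]^{γ_i} and the normalized multi-index Le Roy function 𝔽(z) = z + ∑_{k=1}^∞ (∏_{i=1}^n [Γ(β_i)]^{γ_i} / ∏_{i=1}^n [Γ(α_i k + β_i)]^{γ_i}) z^{k+1}. Then for all real z > 0, 𝔽(z) ≤ z + z·θ·(e^z − 1). -/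
/-!
Write `G(x) = ∏ᵢ Γ(αᵢ x + βᵢ)^γᵢ`, so that the `k`-th coefficient of the series is
`G(0) / G(k + 1)` and `θ = G(0) / G(1)`. Since `Γ(y + 1) = y Γ(y)` and `Γ` is increasing on
`[2, ∞)`, passing from `x` to `x + 1` multiplies each factor by at least `(αᵢ x + βᵢ)^γᵢ ≥ 1`, and
the factor with `αⱼ + βⱼ ≥ 2` by at least `x + 1`. Hence `(k + 1)! G(1) ≤ G(k + 1)`, and the series is
dominated termwise by `θ ∑ z^(k+2) / (k + 1)! = z θ (eᶻ - 1)`.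
-/

open Real Finset Nat

lemma Real.mul_Gamma_le_Gamma {x y : ℝ} (hx : 1 ≤ x) (hxy : x + 1 ≤ y) :
    x * Gamma x ≤ Gamma y := by
  rw [← Gamma_add_one (by positivity)]
  exact Gamma_strictMonoOn_Ici.monotoneOn (by simp; linarith) (by simp; linarith) hxy

lemma Real.hasSum_pow_add_two_div_factorial_add_one (z : ℝ) :
    HasSum (fun k : ℕ => z ^ (k + 2) / (k + 1)!) (z * (exp z - 1)) := by
  have h := (hasSum_nat_add_iff' 1).mpr (NormedSpace.expSeries_div_hasSum_exp z)
  rw [← exp_eq_exp_ℝ, sum_range_one, pow_zero, factorial_zero, cast_one, div_one] at h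
  have hterm : (fun k : ℕ => z ^ (k + 2) / (k + 1)!) =
      fun k => z * (z ^ (k + 1) / (k + 1)!) := by
    funext k
    ring
  exact hterm ▸ h.mul_left z

noncomputable def leRoyGammaProd {n : ℕ} (α β γ : Fin n → ℝ) (x : ℝ) : ℝ :=
  ∏ i, Gamma (α i * x + β i) ^ γ i

section LeRoy

variable {n : ℕ} {α β γ : Fin n → ℝ}

lemma leRoyGammaProd_pos {x : ℝ} (h : ∀ i, 0 < α i * x + β i) :
    0 < leRoyGammaProd α β γ x :=
  prod_pos fun i _ => rpow_pos_of_pos (Gamma_pos_of_pos (h i)) _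

lemma add_one_le_prod_rpow (hα : ∀ i, 1 ≤ α i) (hβ : ∀ i, 0 ≤ β i) (hγ : ∀ i, 1 ≤ γ i)
    (hj : ∃ j, 2 ≤ α j + β j) {x : ℝ} (hx : 1 ≤ x) :
    x + 1 ≤ ∏ i, (α i * x + β i) ^ γ i := by
  obtain ⟨j, hj⟩ := hj
  have harg : ∀ i, 1 ≤ α i * x + β i := fun i => by nlinarith [hα i, hβ i]
  calc x + 1 ≤ α j * x + β j := by nlinarith [hα j]
    _ ≤ (α j * x + β j) ^ γ j := by
      simpa using rpow_le_rpow_of_exponent_le (harg j) (hγ j)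
    _ = ∏ i ∈ {j}, (α i * x + β i) ^ γ i :=
      (prod_singleton (fun i => (α i * x + β i) ^ γ i) j).symm
    _ ≤ ∏ i, (α i * x + β i) ^ γ i :=
      prod_le_prod_of_subset_of_one_le (subset_univ _)
        (fun i _ => (rpow_pos_of_pos (by linarith [harg i]) _).le)
        (fun i _ _ => one_le_rpow (harg i) (by linarith [hγ i]))

lemma add_one_mul_leRoyGammaProd_le (hα : ∀ i, 1 ≤ α i) (hβ : ∀ i, 0 ≤ β i)
    (hγ : ∀ i, 1 ≤ γ i) (hj : ∃ j, 2 ≤ α j + β j) {x : ℝ} (hx : 1 ≤ x) :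
    (x + 1) * leRoyGammaProd α β γ x ≤ leRoyGammaProd α β γ (x + 1) := by
  have harg : ∀ i, 1 ≤ α i * x + β i := fun i => by nlinarith [hα i, hβ i]
  have hΓ : ∀ i, 0 < (α i * x + β i) * Gamma (α i * x + β i) := fun i =>
    mul_pos (by linarith [harg i]) (Gamma_pos_of_pos (by linarith [harg i]))
  calc (x + 1) * leRoyGammaProd α β γ x
      ≤ (∏ i, (α i * x + β i) ^ γ i) * leRoyGammaProd α β γ x := by
        gcongr
        · exact (leRoyGammaProd_pos fun i => by linarith [harg i]).le
        · exact add_one_le_prod_rpow hα hβ hγ hj hx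
    _ = ∏ i, ((α i * x + β i) * Gamma (α i * x + β i)) ^ γ i := by
        rw [leRoyGammaProd, ← prod_mul_distrib]
        refine prod_congr rfl fun i _ => ?_
        rw [mul_rpow (by linarith [harg i]) (Gamma_pos_of_pos (by linarith [harg i])).le]
    _ ≤ leRoyGammaProd α β γ (x + 1) :=
        prod_le_prod (fun i _ => (rpow_pos_of_pos (hΓ i) _).le) fun i _ =>
          rpow_le_rpow (hΓ i).le (mul_Gamma_le_Gamma (harg i) (by nlinarith [hα i]))
            (by linarith [hγ i])

lemma factorial_mul_leRoyGammaProd_one_le (hα : ∀ i, 1 ≤ α i) (hβ : ∀ i, 0 ≤ β i)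
    (hγ : ∀ i, 1 ≤ γ i) (hj : ∃ j, 2 ≤ α j + β j) (k : ℕ) :
    (k + 1)! * leRoyGammaProd α β γ 1 ≤ leRoyGammaProd α β γ (k + 1 : ℕ) := by
  induction k with
  | zero => simp
  | succ k ih =>
    have hk : (1 : ℝ) ≤ (k + 1 : ℕ) := by norm_num
    calc ((k + 2)! : ℝ) * leRoyGammaProd α β γ 1
        = ((k + 1 : ℕ) + 1) * ((k + 1)! * leRoyGammaProd α β γ 1) := by
          push_cast [factorial_succ]
          ring
      _ ≤ ((k + 1 : ℕ) + 1) * leRoyGammaProd α β γ (k + 1 : ℕ) := by gcongr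
      _ ≤ leRoyGammaProd α β γ ((k + 1 : ℕ) + 1) :=
          add_one_mul_leRoyGammaProd_le hα hβ hγ hj hk
      _ = leRoyGammaProd α β γ (k + 2 : ℕ) := by push_cast; ring_nf

lemma leRoyGammaProd_zero_div_le (hα : ∀ i, 1 ≤ α i) (hβ : ∀ i, 0 < β i)
    (hγ : ∀ i, 1 ≤ γ i) (hj : ∃ j, 2 ≤ α j + β j) (k : ℕ) :
    leRoyGammaProd α β γ 0 / leRoyGammaProd α β γ (k + 1 : ℕ) ≤
      leRoyGammaProd α β γ 0 / leRoyGammaProd α β γ 1 / (k + 1)! := by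
  have hpos : ∀ x : ℝ, 0 ≤ x → 0 < leRoyGammaProd α β γ x := fun x hx =>
    leRoyGammaProd_pos fun i => by nlinarith [hα i, hβ i]
  rw [div_div]
  gcongr
  · exact (hpos 0 le_rfl).le
  · exact mul_pos (hpos 1 zero_le_one) (by positivity)
  · rw [mul_comm]
    exact factorial_mul_leRoyGammaProd_one_le hα (fun i => (hβ i).le) hγ hj k

end LeRoy

theorem multi_leroy_exp_bound_general (n : ℕ)
    (α β γ : Fin n → ℝ)
    (hα : ∀ i, 1 ≤ α i) (hγ : ∀ i, 1 ≤ γ i) (hβ : ∀ i, 0 < β i)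
    (hj : ∃ j, 2 ≤ α j + β j) :
    ∀ z : ℝ, 0 < z →
      z + ∑' k : ℕ,
          ((∏ i, (Real.Gamma (β i)) ^ γ i) /
            ∏ i, (Real.Gamma (α i * (k + 1 : ℕ) + β i)) ^ γ i) * z ^ (k + 2) ≤
        z + z * (∏ i, (Real.Gamma (β i) / Real.Gamma (α i + β i)) ^ γ i)
          * (Real.exp z - 1) := by
  intro z hz
  set G := leRoyGammaProd α β γ
  have hG0 : G 0 = ∏ i, Gamma (β i) ^ γ i := by simp [G, leRoyGammaProd]
  have hθ : ∏ i, (Gamma (β i) / Gamma (α i + β i)) ^ γ i = G 0 / G 1 := by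
    simp only [G, leRoyGammaProd, mul_zero, zero_add, mul_one, ← prod_div_distrib]
    exact prod_congr rfl fun i _ => div_rpow (Gamma_pos_of_pos (hβ i)).le
      (Gamma_pos_of_pos (by linarith [hα i, hβ i])).le _
  have hmajorant := (hasSum_pow_add_two_div_factorial_add_one z).mul_left (G 0 / G 1)
  have hle : ∀ k : ℕ,
      G 0 / G (k + 1 : ℕ) * z ^ (k + 2) ≤ G 0 / G 1 * (z ^ (k + 2) / (k + 1)!) := fun k =>
    (mul_le_mul_of_nonneg_right (leRoyGammaProd_zero_div_le hα hβ hγ hj k)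
      (by positivity)).trans_eq (by ring)
  have hnonneg : ∀ k : ℕ, 0 ≤ G 0 / G (k + 1 : ℕ) * z ^ (k + 2) := fun k =>
    mul_nonneg (div_nonneg (leRoyGammaProd_pos fun i => by simpa using hβ i).le
      (leRoyGammaProd_pos fun i => by positivity [hα i, hβ i]).le) (by positivity)
  rw [hθ, mul_comm z, mul_assoc, ← hmajorant.tsum_eq, ← hG0]
  exact add_le_add_right (Summable.tsum_le_tsum hle
    (Summable.of_nonneg_of_le hnonneg hle hmajorant.summable) hmajorant.summable) z

theorem multi_leroy_exp_bound (n : ℕ) (hn : 1 ≤ n)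
    (α β γ : Fin n → ℝ)
    (hα : ∀ i, 1 ≤ α i) (hγ : ∀ i, 1 ≤ γ i) (hβ : ∀ i, 0 < β i)
    (hj : ∃ j, 2 ≤ α j + β j) :
    ∀ z : ℝ, 0 < z →
      z + ∑' k : ℕ,
          ((∏ i, (Real.Gamma (β i)) ^ γ i) /
            ∏ i, (Real.Gamma (α i * (k + 1 : ℕ) + β i)) ^ γ i) * z ^ (k + 2) ≤
        z + z * (∏ i, (Real.Gamma (β i) / Real.Gamma (α i + β i)) ^ γ i)
          * (Real.exp z - 1) :=
  multi_leroy_exp_bound_general n α β γ hα hγ hβ hj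
end

section
/- Let f(z) = z + ∑_{k=2}^∞ a_k z^k be analytic on the unit disk with real coefficients, and suppose |f(z)/z − 1| < 1 for all z in the unit disk D. Then f is univalent and starlike in the disk {z : |z| < 1/2}. -/
/-!
Write `f z = z (1 + w z)`; the hypothesis says that `w` maps the unit disc into itself with
`w 0 = 0`. By Schwarz's lemma `‖w z‖ ≤ ‖z‖`, and by the Schwarz–Pick lemma (Schwarz's lemma
conjugated by disc automorphisms) `‖w' z‖ (1 - ‖z‖²) ≤ 1 - ‖w z‖²`. For `‖z‖ < 1/2` these give
`‖z w' z‖ < 1 - ‖w z‖ ≤ ‖1 + w z‖`, so `z f' / f = 1 + z w' / (1 + w)` has positive real part,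
and `‖f' z - 1‖ = ‖w z + z w' z‖ ≤ 2 ‖z‖ < 1`, so `f - id` is a contraction on every smaller
disc and `f` is injective there.
-/

open Complex Metric Set ComplexConjugate

noncomputable def diskMobius (a z : ℂ) : ℂ := (z - a) / (1 - conj a * z)

lemma norm_one_sub_conj_mul_sq_sub_norm_sub_sq (a z : ℂ) :
    ‖1 - conj a * z‖ ^ 2 - ‖z - a‖ ^ 2 = (1 - ‖a‖ ^ 2) * (1 - ‖z‖ ^ 2) := by
  simp only [← normSq_eq_norm_sq, normSq_apply, sub_re, sub_im, mul_re, mul_im, conj_re, conj_im,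
    one_re, one_im]
  ring

lemma one_sub_conj_mul_ne_zero {a z : ℂ} (ha : ‖a‖ < 1) (hz : ‖z‖ < 1) : 1 - conj a * z ≠ 0 := by
  intro h
  have h1 : ‖conj a * z‖ = 1 := by rw [← norm_one (α := ℂ), ← sub_eq_zero.1 h]
  rw [norm_mul, norm_conj] at h1
  nlinarith [norm_nonneg a, norm_nonneg z]

lemma norm_diskMobius_lt_one {a z : ℂ} (ha : ‖a‖ < 1) (hz : ‖z‖ < 1) : ‖diskMobius a z‖ < 1 := by
  rw [diskMobius, norm_div, div_lt_one (norm_pos_iff.2 (one_sub_conj_mul_ne_zero ha hz))]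
  refine lt_of_pow_lt_pow_left₀ 2 (norm_nonneg _) ?_
  have := norm_one_sub_conj_mul_sq_sub_norm_sub_sq a z
  have ha2 : ‖a‖ ^ 2 < 1 := pow_lt_one₀ (norm_nonneg a) ha two_ne_zero
  have hz2 : ‖z‖ ^ 2 < 1 := pow_lt_one₀ (norm_nonneg z) hz two_ne_zero
  nlinarith [mul_pos (sub_pos.2 ha2) (sub_pos.2 hz2)]

lemma mapsTo_diskMobius {a : ℂ} (ha : ‖a‖ < 1) : MapsTo (diskMobius a) (ball 0 1) (ball 0 1) :=
  fun _ hz => mem_ball_zero_iff.2 (norm_diskMobius_lt_one ha (mem_ball_zero_iff.1 hz))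

lemma hasDerivAt_diskMobius (a : ℂ) {z : ℂ} (hz : 1 - conj a * z ≠ 0) :
    HasDerivAt (diskMobius a) ((1 - conj a * a) / (1 - conj a * z) ^ 2) z := by
  refine (((hasDerivAt_id z).sub_const a).div
    (((hasDerivAt_id z).const_mul (conj a)).const_sub 1) hz).congr_deriv ?_
  simp only [id]
  ring

lemma differentiableOn_diskMobius {a : ℂ} (ha : ‖a‖ < 1) :
    DifferentiableOn ℂ (diskMobius a) (ball 0 1) := fun _ hz =>
  (hasDerivAt_diskMobius a
    (one_sub_conj_mul_ne_zero ha (mem_ball_zero_iff.1 hz))).differentiableAt.differentiableWithinAt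

theorem norm_deriv_mul_one_sub_sq_le_of_mapsTo_ball {w : ℂ → ℂ}
    (hd : DifferentiableOn ℂ w (ball 0 1)) (hm : MapsTo w (ball 0 1) (ball 0 1)) {z : ℂ}
    (hz : ‖z‖ < 1) : ‖deriv w z‖ * (1 - ‖z‖ ^ 2) ≤ 1 - ‖w z‖ ^ 2 := by
  have hwz : ‖w z‖ < 1 := mem_ball_zero_iff.1 (hm (mem_ball_zero_iff.2 hz))
  have hz' : ‖-z‖ < 1 := by rwa [norm_neg]
  set g := diskMobius (w z) ∘ w ∘ diskMobius (-z)
  have hg_maps : MapsTo g (ball 0 1) (ball 0 1) :=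
    (mapsTo_diskMobius hwz).comp (hm.comp (mapsTo_diskMobius hz'))
  have hg_diff : DifferentiableOn ℂ g (ball 0 1) :=
    (differentiableOn_diskMobius hwz).comp
      (hd.comp (differentiableOn_diskMobius hz') (mapsTo_diskMobius hz'))
      (hm.comp (mapsTo_diskMobius hz'))
  have hmob0 : diskMobius (-z) 0 = z := by simp [diskMobius]
  have hg0 : g 0 = 0 := by simp [g, diskMobius]
  have hg' : HasDerivAt g ((1 - conj (w z) * w z) / (1 - conj (w z) * w z) ^ 2 *
      (deriv w z * ((1 - conj (-z) * -z) / (1 - conj (-z) * 0) ^ 2))) 0 := by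
    have hφ := hasDerivAt_diskMobius (-z) (z := 0) (by simp)
    have hw : HasDerivAt w (deriv w z) (diskMobius (-z) 0) := by
      rw [hmob0]
      exact (hd.differentiableAt (isOpen_ball.mem_nhds (mem_ball_zero_iff.2 hz))).hasDerivAt
    have hψ : HasDerivAt (diskMobius (w z))
        ((1 - conj (w z) * w z) / (1 - conj (w z) * w z) ^ 2) (w (diskMobius (-z) 0)) := by
      rw [hmob0]
      exact hasDerivAt_diskMobius (w z) (one_sub_conj_mul_ne_zero hwz hwz)
    exact hψ.comp 0 (hw.comp 0 hφ)
  have hle : ‖deriv g 0‖ ≤ 1 := norm_deriv_le_one_of_mapsTo_ball hg_diff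
    (by rw [hg0]; exact hg_maps.mono_right ball_subset_closedBall) one_pos
  rw [hg'.deriv] at hle
  have hnorm : ∀ r : ℝ, r < 1 → ‖(1 : ℂ) - r‖ = 1 - r := fun r hr => by
    rw [← ofReal_one, ← ofReal_sub, Complex.norm_of_nonneg (by linarith)]
  have hwz2 : ‖w z‖ ^ 2 < 1 := pow_lt_one₀ (norm_nonneg _) hwz two_ne_zero
  have hz2 : ‖z‖ ^ 2 < 1 := pow_lt_one₀ (norm_nonneg _) hz two_ne_zero
  simp only [conj_mul', map_neg, neg_mul_neg, mul_zero, sub_zero, one_pow, div_one, norm_mul,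
    norm_div, norm_pow, ← ofReal_pow, hnorm _ hwz2, hnorm _ hz2] at hle
  rwa [pow_two (1 - ‖w z‖ ^ 2), div_mul_cancel_left₀ (sub_pos.2 hwz2).ne',
    inv_mul_le_iff₀ (sub_pos.2 hwz2), mul_one] at hle

theorem Convex.injOn_of_norm_deriv_sub_one_le {𝕜 : Type*} [RCLike 𝕜] {f f' : 𝕜 → 𝕜}
    {s : Set 𝕜} {c : ℝ} (hs : Convex ℝ s) (hf : ∀ x ∈ s, HasDerivWithinAt f (f' x) s x)
    (hbound : ∀ x ∈ s, ‖f' x - 1‖ ≤ c) (hc : c < 1) : InjOn f s := by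
  intro x hx y hy hxy
  have h := hs.norm_image_sub_le_of_norm_hasDerivWithin_le (f := fun x => f x - x)
    (fun x hx => (hf x hx).sub (hasDerivWithinAt_id x s)) hbound hx hy
  rw [hxy, sub_sub_sub_cancel_left, norm_sub_rev] at h
  by_contra hne
  nlinarith [norm_pos_iff.2 (sub_ne_zero.2 (Ne.symm hne))]

structure IsSchwarzFunction (w : ℂ → ℂ) : Prop where
  differentiableOn : DifferentiableOn ℂ w (ball 0 1)
  mapsTo : MapsTo w (ball 0 1) (ball 0 1)
  map_zero : w 0 = 0

namespace IsSchwarzFunction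

variable {w : ℂ → ℂ}

lemma norm_le (hw : IsSchwarzFunction w) {z : ℂ} (hz : ‖z‖ < 1) : ‖w z‖ ≤ ‖z‖ :=
  norm_le_norm_of_mapsTo_ball hw.differentiableOn (hw.mapsTo.mono_right ball_subset_closedBall)
    hw.map_zero hz

lemma norm_lt_one (hw : IsSchwarzFunction w) {z : ℂ} (hz : ‖z‖ < 1) : ‖w z‖ < 1 :=
  mem_ball_zero_iff.1 (hw.mapsTo (mem_ball_zero_iff.2 hz))

lemma norm_mul_deriv_lt_one_sub_norm (hw : IsSchwarzFunction w) {z : ℂ} (hz : ‖z‖ < 1 / 2) :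
    ‖z * deriv w z‖ < 1 - ‖w z‖ := by
  have hz1 : ‖z‖ < 1 := hz.trans (by norm_num)
  have ht := hw.norm_le hz1
  have ht1 := hw.norm_lt_one hz1
  have hsp := norm_deriv_mul_one_sub_sq_le_of_mapsTo_ball hw.differentiableOn hw.mapsTo hz1
  rw [norm_mul]
  have h0 := norm_nonneg z
  have hpos : 0 < 1 - ‖z‖ ^ 2 := by nlinarith
  -- With `t = ‖w z‖ ≤ r = ‖z‖`, Schwarz–Pick gives `r ‖w' z‖ ≤ r (1 + t) (1 - t) / (1 - r²)`,
  -- which is `< 1 - t` because `r (1 + r) < 1 - r²` exactly when `r < 1 / 2`.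
  nlinarith [mul_le_mul_of_nonneg_left hsp h0, mul_pos (sub_pos.2 ht1)
    (show 0 < 1 - ‖z‖ - 2 * ‖z‖ ^ 2 by nlinarith),
    mul_nonneg (sub_nonneg.2 ht) (mul_nonneg h0 (sub_pos.2 ht1).le)]

lemma norm_add_mul_deriv_le (hw : IsSchwarzFunction w) {z : ℂ} (hz : ‖z‖ < 1 / 2) :
    ‖w z + z * deriv w z‖ ≤ 2 * ‖z‖ := by
  have hz1 : ‖z‖ < 1 := hz.trans (by norm_num)
  have ht := hw.norm_le hz1
  have hsp := norm_deriv_mul_one_sub_sq_le_of_mapsTo_ball hw.differentiableOn hw.mapsTo hz1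
  have h0 := norm_nonneg z
  have hpos : 0 < 1 - ‖z‖ ^ 2 := by nlinarith
  refine (norm_add_le _ _).trans ?_
  rw [norm_mul]
  -- `2 r (1 - r²) - t (1 - r²) - r (1 - t²) = (r - t) (1 - r t - 2 r²)`
  nlinarith [mul_le_mul_of_nonneg_left hsp h0, mul_nonneg (sub_nonneg.2 ht)
    (show 0 ≤ 1 - ‖z‖ * ‖w z‖ - 2 * ‖z‖ ^ 2 by nlinarith)]

lemma hasDerivAt_mul_one_add (hw : IsSchwarzFunction w) {z : ℂ} (hz : ‖z‖ < 1) :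
    HasDerivAt (fun z => z * (1 + w z)) (1 + (w z + z * deriv w z)) z := by
  have hwz : HasDerivAt w (deriv w z) z := (hw.differentiableOn.differentiableAt
    (isOpen_ball.mem_nhds (mem_ball_zero_iff.2 hz))).hasDerivAt
  exact ((hasDerivAt_id z).mul (hwz.const_add 1)).congr_deriv (by simp only [id]; ring)

lemma injOn_mul_one_add (hw : IsSchwarzFunction w) :
    InjOn (fun z => z * (1 + w z)) (ball 0 (1 / 2)) := by
  intro z₁ hz₁ z₂ hz₂
  rw [mem_ball_zero_iff] at hz₁ hz₂
  set ρ := max ‖z₁‖ ‖z₂‖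
  have hρ : ρ < 1 / 2 := max_lt hz₁ hz₂
  refine (convex_closedBall (0 : ℂ) ρ).injOn_of_norm_deriv_sub_one_le
    (fun x hx => (hw.hasDerivAt_mul_one_add ?_).hasDerivWithinAt) (fun x hx => ?_)
    (show 2 * ρ < 1 by linarith) (by simp [ρ]) (by simp [ρ])
  · linarith [mem_closedBall_zero_iff.1 hx]
  · have hxρ := mem_closedBall_zero_iff.1 hx
    rw [add_sub_cancel_left]
    linarith [hw.norm_add_mul_deriv_le (hxρ.trans_lt hρ)]

lemma re_mul_deriv_div_pos (hw : IsSchwarzFunction w) {z : ℂ} (hz : ‖z‖ < 1 / 2)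
    (hz0 : z ≠ 0) : 0 < (z * deriv (fun z => z * (1 + w z)) z / (z * (1 + w z))).re := by
  have hz1 : ‖z‖ < 1 := hz.trans (by norm_num)
  have hlt := hw.norm_mul_deriv_lt_one_sub_norm hz
  have hle : 1 - ‖w z‖ ≤ ‖1 + w z‖ := by
    simpa using norm_sub_norm_le (1 : ℂ) (-w z)
  have hne : 1 + w z ≠ 0 := norm_pos_iff.1 ((sub_pos.2 (hw.norm_lt_one hz1)).trans_le hle)
  have hsmall : ‖z * deriv w z / (1 + w z)‖ < 1 := by
    rw [norm_div, div_lt_one (norm_pos_iff.2 hne)]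
    exact hlt.trans_le hle
  have hquot : z * deriv (fun z => z * (1 + w z)) z / (z * (1 + w z)) =
      1 + z * deriv w z / (1 + w z) := by
    rw [(hw.hasDerivAt_mul_one_add hz1).deriv]
    field_simp
    ring
  rw [hquot, add_re, one_re]
  linarith [neg_abs_le (z * deriv w z / (1 + w z)).re, abs_re_le_norm (z * deriv w z / (1 + w z))]

end IsSchwarzFunction

theorem mcgregor_starlike_general (f : ℂ → ℂ)
    (hf : AnalyticOn ℂ f (Metric.ball (0 : ℂ) 1))
    (hf0 : f 0 = 0) (hf1 : deriv f 0 = 1)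
    (hbound : ∀ z : ℂ, ‖z‖ < 1 → z ≠ 0 → ‖f z / z - 1‖ < 1) :
    Set.InjOn f (Metric.ball (0 : ℂ) (1 / 2)) ∧
      ∀ z : ℂ, ‖z‖ < 1 / 2 → z ≠ 0 →
        0 < (z * deriv f z / f z).re := by
  set w : ℂ → ℂ := fun z => dslope f 0 z - 1
  have hfw : f = fun z => z * (1 + w z) := funext fun z => by
    simpa [w, hf0] using (sub_smul_dslope f 0 z).symm
  have hw : IsSchwarzFunction w :=
    { differentiableOn :=
        ((differentiableOn_dslope (ball_mem_nhds 0 one_pos)).2 hf.differentiableOn).sub_const 1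
      mapsTo := fun z hz => by
        rcases eq_or_ne z 0 with rfl | hz0
        · simp [w, hf1]
        · rw [mem_ball_zero_iff] at hz ⊢
          simpa [w, dslope_of_ne f hz0, slope_def_field, hf0] using hbound z hz hz0
      map_zero := by simp [w, hf1] }
  rw [hfw]
  exact ⟨hw.injOn_mul_one_add, fun z hz hz0 => hw.re_mul_deriv_div_pos hz hz0⟩

/-- McGregor's lemma. -/
theorem mcgregor_starlike (f : ℂ → ℂ)
    (hf : AnalyticOn ℂ f (Metric.ball (0 : ℂ) 1))
    (hf0 : f 0 = 0) (hf1 : deriv f 0 = 1)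
    (hreal : ∀ k : ℕ, (iteratedDeriv k f 0).im = 0)
    (hbound : ∀ z : ℂ, ‖z‖ < 1 → z ≠ 0 → ‖f z / z - 1‖ < 1) :
    Set.InjOn f (Metric.ball (0 : ℂ) (1 / 2)) ∧
      ∀ z : ℂ, ‖z‖ < 1 / 2 → z ≠ 0 →
        0 < (z * deriv f z / f z).re :=
  mcgregor_starlike_general f hf hf0 hf1 hbound
end

section
/- Let n ≥ 1 and parameters α_i ≥ 1, γ_i ≥ 1, β_i ≥ 2 for all i = 1,…,n. Then the sequence y_k = ∏_{i=1}^n [Γ(β_i)]^{γ_i} · Γ(k+2) / ∏_{i=1}^n [Γ(α_i k + β_i)]^{γ_i} is monotonically decreasing for k ≥ 1. -/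
theorem multi_leroy_yk_antitone (n : ℕ) (hn : 1 ≤ n)
    (α β γ : Fin n → ℝ)
    (hα : ∀ i, 1 ≤ α i) (hγ : ∀ i, 1 ≤ γ i) (hβ : ∀ i, 2 ≤ β i) :
    ∀ k : ℕ, 1 ≤ k →
      (∏ i, (Real.Gamma (β i)) ^ γ i) * Real.Gamma ((k + 1 : ℕ) + 2) /
          ∏ i, (Real.Gamma (α i * (k + 1 : ℕ) + β i)) ^ γ i ≤
        (∏ i, (Real.Gamma (β i)) ^ γ i) * Real.Gamma ((k : ℕ) + 2) /
          ∏ i, (Real.Gamma (α i * (k : ℕ) + β i)) ^ γ i := by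
  intro k hk
  have hk1 : (1 : ℝ) ≤ (k : ℝ) := by exact_mod_cast hk
  -- positivity facts
  have hx2 : ∀ i, (2 : ℝ) ≤ α i * k + β i := fun i => by nlinarith [hα i, hβ i]
  have hGpos : ∀ i, 0 < Real.Gamma (α i * k + β i) := fun i =>
    Real.Gamma_pos_of_pos (by linarith [hx2 i])
  have hx2' : ∀ i, (2 : ℝ) ≤ α i * (k + 1 : ℕ) + β i := fun i => by
    push_cast; nlinarith [hα i, hβ i]
  have hGpos' : ∀ i, 0 < Real.Gamma (α i * (k + 1 : ℕ) + β i) := fun i =>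
    Real.Gamma_pos_of_pos (by linarith [hx2' i])
  have hPpos : 0 < ∏ i, (Real.Gamma (α i * (k : ℕ) + β i)) ^ γ i :=
    Finset.prod_pos fun i _ => Real.rpow_pos_of_pos (hGpos i) _
  have hPpos' : 0 < ∏ i, (Real.Gamma (α i * (k + 1 : ℕ) + β i)) ^ γ i :=
    Finset.prod_pos fun i _ => Real.rpow_pos_of_pos (hGpos' i) _
  have hCpos : 0 < ∏ i, (Real.Gamma (β i)) ^ γ i :=
    Finset.prod_pos fun i _ => Real.rpow_pos_of_pos
      (Real.Gamma_pos_of_pos (by linarith [hβ i])) _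
  rw [div_le_div_iff₀ hPpos' hPpos]
  -- Γ(k+3) = (k+2) Γ(k+2)
  have hG3 : Real.Gamma ((k + 1 : ℕ) + 2) = ((k : ℝ) + 2) * Real.Gamma ((k : ℕ) + 2) := by
    have : ((k + 1 : ℕ) + 2 : ℝ) = ((k : ℕ) + 2 : ℝ) + 1 := by push_cast; ring
    rw [this, Real.Gamma_add_one (by positivity)]
  rw [hG3]
  have hGam2pos : 0 < Real.Gamma ((k : ℕ) + 2) := Real.Gamma_pos_of_pos (by positivity)
  -- key: (k+2) * P_k ≤ P_{k+1}
  have key : ((k : ℝ) + 2) * ∏ i, (Real.Gamma (α i * (k : ℕ) + β i)) ^ γ i ≤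
      ∏ i, (Real.Gamma (α i * (k + 1 : ℕ) + β i)) ^ γ i := by
    have step : ∀ i, (((k : ℝ) + 2) * Real.Gamma (α i * k + β i)) ^ γ i ≤
        (Real.Gamma (α i * (k + 1 : ℕ) + β i)) ^ γ i := by
      intro i
      apply Real.rpow_le_rpow (mul_nonneg (by positivity) (hGpos i).le) _ (by linarith [hγ i])
      calc ((k : ℝ) + 2) * Real.Gamma (α i * k + β i)
          ≤ (α i * k + β i) * Real.Gamma (α i * k + β i) := by
            apply mul_le_mul_of_nonneg_right _ (hGpos i).le
            nlinarith [hα i, hβ i]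
        _ = Real.Gamma ((α i * k + β i) + 1) :=
            (Real.Gamma_add_one (by linarith [hx2 i])).symm
        _ ≤ Real.Gamma (α i * (k + 1 : ℕ) + β i) := by
            apply Real.Gamma_strictMonoOn_Ici.monotoneOn
            · exact Set.mem_Ici.2 (by linarith [hx2 i])
            · exact Set.mem_Ici.2 (hx2' i)
            · push_cast; nlinarith [hα i]
    calc ((k : ℝ) + 2) * ∏ i, (Real.Gamma (α i * (k : ℕ) + β i)) ^ γ i
        ≤ ∏ i, (((k : ℝ) + 2) * Real.Gamma (α i * k + β i)) ^ γ i := by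
          rw [Finset.prod_congr rfl (fun i _ =>
            Real.mul_rpow (by positivity) (hGpos i).le), Finset.prod_mul_distrib]
          apply mul_le_mul_of_nonneg_right _ hPpos.le
          calc ((k : ℝ) + 2) = ((k : ℝ) + 2) ^ (1:ℝ) := (Real.rpow_one _).symm
            _ ≤ ((k : ℝ) + 2) ^ (∑ i, γ i) := by
                apply Real.rpow_le_rpow_of_exponent_le (by linarith)
                calc (1:ℝ) ≤ (n : ℝ) := by exact_mod_cast hn
                  _ = ∑ _i : Fin n, (1:ℝ) := by simp
                  _ ≤ ∑ i, γ i := Finset.sum_le_sum fun i _ => hγ i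
            _ = ∏ i, ((k : ℝ) + 2) ^ γ i :=
                (Real.rpow_sum_of_pos (by positivity) γ Finset.univ)
      _ ≤ ∏ i, (Real.Gamma (α i * (k + 1 : ℕ) + β i)) ^ γ i :=
          Finset.prod_le_prod (fun i _ => Real.rpow_nonneg (mul_nonneg (by positivity) (hGpos i).le) _) (fun i _ => step i)
  calc (∏ i, (Real.Gamma (β i)) ^ γ i) * (((k : ℝ) + 2) * Real.Gamma ((k : ℕ) + 2)) *
        ∏ i, (Real.Gamma (α i * (k : ℕ) + β i)) ^ γ i
      = (∏ i, (Real.Gamma (β i)) ^ γ i) * Real.Gamma ((k : ℕ) + 2) *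
        (((k : ℝ) + 2) * ∏ i, (Real.Gamma (α i * (k : ℕ) + β i)) ^ γ i) := by ring
    _ ≤ (∏ i, (Real.Gamma (β i)) ^ γ i) * Real.Gamma ((k : ℕ) + 2) *
        ∏ i, (Real.Gamma (α i * (k + 1 : ℕ) + β i)) ^ γ i := by
        exact mul_le_mul_of_nonneg_left key (mul_nonneg hCpos.le hGam2pos.le)
end
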